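/- Let r : ℕ → K with K finite and F the set of values occurring infinitely often in r. Then for every N there exist indices s < s' with N ≤ s such that the set of values {r i | s ≤ i ≤ s'} is exactly F. -/
import Mathlib


/-- For every N there are indices N ≤ s < s' such that between them the run visits
exactly the set of states occurring infinitely often. -/
theorem exact_window_of_inf_states {K : Type*} [Fintype K] (r : ℕ → K) :
    ∀ N : ℕ, ∃ s s' : ℕ, N ≤ s ∧ s < s' ∧
      r '' (Set.Icc s s') = {q : K | {i : ℕ | r i = q}.Infinite} := by
  classical
  intro N
  set F : Set K := {q : K | {i : ℕ | r i = q}.Infinite} with hF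
  -- indices whose value is not in F form a finite set
  have hB : {i : ℕ | r i ∉ F}.Finite := by
    have hsub : {i : ℕ | r i ∉ F} ⊆ ⋃ q ∈ {q : K | q ∉ F}, {i : ℕ | r i = q} := by
      intro i hi
      exact Set.mem_biUnion hi rfl
    refine Set.Finite.subset (Set.Finite.biUnion (Set.toFinite _) ?_) hsub
    intro q hq
    exact Set.not_infinite.mp hq
  obtain ⟨m, hm⟩ := hB.bddAbove
  set s : ℕ := max N (m + 1) with hs
  have hsF : ∀ i, s ≤ i → r i ∈ F := by
    intro i hi
    by_contra h
    have := hm h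
    omega
  -- choose witnesses for each q ∈ F
  have hw : ∀ q ∈ F, ∃ i, s < i ∧ r i = q := by
    intro q hq
    obtain ⟨i, hi1, hi2⟩ := hq.exists_gt s
    exact ⟨i, hi2, hi1⟩
  let f : K → ℕ := fun q => if h : q ∈ F then (hw q h).choose else s + 1
  set s' : ℕ := max (s + 1) (Finset.univ.sup f) with hs'
  refine ⟨s, s', le_max_left _ _, by omega, ?_⟩
  ext q
  constructor
  · rintro ⟨i, hi, rfl⟩
    exact hsF i hi.1
  · intro hq
    have hspec := (hw q hq).choose_spec
    refine ⟨f q, ⟨?_, ?_⟩, ?_⟩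
    · simp only [f, dif_pos hq]; omega
    · exact le_trans (Finset.le_sup (Finset.mem_univ q)) (le_max_right _ _)
    · simp only [f, dif_pos hq]; exact hspec.2
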